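/- arXiv:2410.06837 — 3 statements merged into one kernel-verified Lean document; each statement's English description precedes it below -/
import Mathlib

section
/- Let S be a string of length n whose last character occurs at no other position of S, let a be a character with a ≠ S[n], and let w be a nonempty string with occ_S(w) = 1 and occ_{aS}(w) ≥ 2. Then w is a prefix of aS and occ_{aS}(w) = 2. Moreover, letting i be the starting position of the unique occurrence of w in S, we have i + |w| ≤ n, and: if S[i+|w|] ≠ S[|w|], then Φ_{aS}(w) = {(d, S[i+|w|])}, where d = S[i−1] if i ≥ 2 and d = a if i = 1; and if S[i+|w|] = S[|w|], then Φ_{aS}(w) = ∅. -/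
/-!
Because the last character `c` of `S` occurs nowhere else, a nonempty word that is both a prefix
and a suffix of `aS` is all of `aS`. Prepending `a` creates only one new start position, `0`, so
`w` is a prefix of `aS` and occurs in `aS` exactly at `0` and at `i + 1` (0-based, `i` its position
in `S`); the second occurrence cannot end at the end of `aS`. Hence `αw` occurs only at `i`, `wβ`
only at `0` (with `β = S[|w|]`) and at `i + 1` (with `β = S[i + |w|]`), and `αwβ` only at `i`. So
`Φ` is the single pair read off at `i` when the two right extensions differ, and empty otherwise.
-/

variable {Γ : Type*} [DecidableEq Γ]

/-- `occ S w` is the number of occurrences of `w` as a contiguous substring of `S`,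
i.e., the number of (0-based) indices `i` with `S[i..i+|w|-1] = w`. -/
def occ (S w : List Γ) : ℕ :=
  ((List.range S.length).filter fun i => (S.drop i).take w.length = w).length

/-- `Phi S w` is the set of pairs `(α, β)` of characters such that
`occ S (αwβ) = occ S (αw) = occ S (wβ) = 1`. -/
def Phi (S w : List Γ) : Set (Γ × Γ) :=
  {p | occ S (p.1 :: (w ++ [p.2])) = 1 ∧ occ S (p.1 :: w) = 1 ∧ occ S (w ++ [p.2]) = 1}

/-- The net frequency of `w` in `S`. -/
noncomputable def phi (S w : List Γ) : ℕ := (Phi S w).ncard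

namespace List

variable {α : Type*}

theorem eq_of_prefix_of_suffix_of_notMem {w l : List α} {c : α}
    (hc : c ∉ l) (hw : w ≠ []) (hp : w <+: l ++ [c]) (hs : w <:+ l ++ [c]) : w = l ++ [c] := by
  refine (prefix_concat_iff.mp hp).resolve_right fun hpl => hc ?_
  have hlast : w.getLast hw = c := by simpa using hs.getLast hw
  exact hlast ▸ hpl.subset (getLast_mem hw)

theorem getElem?_cons_eq_some_ite {a : α} {l : List α} {k : ℕ}
    (hk : k ≤ l.length) : (a :: l)[k]? = some (if k = 0 then a else l.getD (k - 1) a) := by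
  rw [getElem?_cons]
  split_ifs
  · rfl
  · rw [getD_eq_getElem _ _ (by omega), getElem?_eq_getElem (by omega)]

end List

def OccursAt {α : Type*} (L w : List α) (i : ℕ) : Prop := (L.drop i).take w.length = w

section Occurrences

variable {α : Type*} {L w : List α} {i : ℕ}

theorem OccursAt.add_length_le (hw : w ≠ []) (h : OccursAt L w i) :
    i + w.length ≤ L.length := by
  have hlen := congrArg List.length h
  simp only [List.length_take, List.length_drop] at hlen
  have := List.length_pos_iff.mpr hw
  omega

theorem OccursAt.isSuffix (h : OccursAt L w i) (hi : L.length ≤ i + w.length) : w <:+ L := by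
  rw [← h, List.take_of_length_le (by simp; omega)]
  exact List.drop_suffix i L

theorem occursAt_zero_iff : OccursAt L w 0 ↔ w <+: L := by
  rw [OccursAt, List.drop_zero, List.prefix_iff_eq_take, eq_comm]

theorem occursAt_cons_succ_iff {a : α} : OccursAt (a :: L) w (i + 1) ↔ OccursAt L w i :=
  Iff.rfl

theorem occursAt_cons_iff {a : α} :
    OccursAt L (a :: w) i ↔ L[i]? = some a ∧ OccursAt L w (i + 1) := by
  unfold OccursAt
  rw [List.length_cons, ← List.drop_drop, show L[i]? = (L.drop i)[0]? by simp]
  cases L.drop i <;> simp [eq_comm]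

theorem occursAt_append_singleton_iff {b : α} :
    OccursAt L (w ++ [b]) i ↔ OccursAt L w i ∧ L[i + w.length]? = some b := by
  unfold OccursAt
  rw [List.length_append, List.length_singleton]
  constructor
  · intro h
    have h₁ : (L.drop i).take w.length = w := by
      simpa [List.take_take] using congrArg (List.take w.length) h
    rw [List.take_add_one, h₁, List.getElem?_drop] at h
    exact ⟨h₁, by simpa using List.append_cancel_left h⟩
  · rintro ⟨h₁, h₂⟩
    rw [List.take_add_one, h₁, List.getElem?_drop, h₂]
    rfl

variable [DecidableEq α]

instance : DecidablePred (OccursAt L w) := fun _ => inferInstanceAs (Decidable (_ = _))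

theorem occ_eq_card : occ L w = ((Finset.range L.length).filter (OccursAt L w)).card := rfl

theorem occ_eq_one_iff (hw : w ≠ []) : occ L w = 1 ↔ ∃! i, OccursAt L w i := by
  rw [occ_eq_card, Finset.card_eq_one]
  have hlt : ∀ {j}, OccursAt L w j → j < L.length := fun h => by
    have := h.add_length_le hw
    have := List.length_pos_iff.mpr hw
    omega
  constructor
  · rintro ⟨i, hi⟩
    have hmem : ∀ j, OccursAt L w j ↔ j = i := fun j => by
      rw [← Finset.mem_singleton, ← hi, Finset.mem_filter, Finset.mem_range]
      exact ⟨fun h => ⟨hlt h, h⟩, And.right⟩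
    exact ⟨i, (hmem i).mpr rfl, fun j => (hmem j).mp⟩
  · rintro ⟨i, hi, huniq⟩
    refine ⟨i, Finset.eq_singleton_iff_unique_mem.mpr ⟨?_, fun j hj => ?_⟩⟩
    · exact Finset.mem_filter.mpr ⟨Finset.mem_range.mpr (hlt hi), hi⟩
    · exact huniq j (Finset.mem_filter.mp hj).2

theorem occ_cons (a : α) : occ (a :: L) w = occ L w + if w <+: a :: L then 1 else 0 := by
  unfold occ
  rw [← List.countP_eq_length_filter, ← List.countP_eq_length_filter, List.length_cons,
    List.range_succ_eq_map, List.countP_cons, List.countP_map]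
  simp [List.prefix_iff_eq_take, eq_comm, Function.comp_def]

theorem Phi_eq_of_occursAt_iff {p : ℕ} {x y z : α}
    (hocc : ∀ j, OccursAt L w j ↔ j = 0 ∨ j = p + 1)
    (hx : L[p]? = some x) (hy : L[w.length]? = some y) (hz : L[p + 1 + w.length]? = some z) :
    Phi L w = if y = z then ∅ else {(x, z)} := by
  have hcons : ∀ a j, OccursAt L (a :: w) j ↔ j = p ∧ a = x := fun a j => by
    rw [occursAt_cons_iff, hocc]
    constructor
    · rintro ⟨ha, hj | hj⟩
      · omega
      · obtain rfl : j = p := by omega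
        exact ⟨rfl, by simpa [hx] using ha.symm⟩
    · rintro ⟨rfl, rfl⟩
      exact ⟨hx, Or.inr rfl⟩
  have hconcat : ∀ b j, OccursAt L (w ++ [b]) j ↔ (j = 0 ∧ b = y) ∨ (j = p + 1 ∧ b = z) :=
    fun b j => by
      rw [occursAt_append_singleton_iff, hocc]
      constructor
      · rintro ⟨rfl | rfl, hb⟩
        · exact Or.inl ⟨rfl, by simpa [hy] using hb.symm⟩
        · exact Or.inr ⟨rfl, by simpa [hz] using hb.symm⟩
      · rintro (⟨rfl, rfl⟩ | ⟨rfl, rfl⟩)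
        · exact ⟨Or.inl rfl, by simpa using hy⟩
        · exact ⟨Or.inr rfl, hz⟩
  have hboth : ∀ a b j, OccursAt L (a :: (w ++ [b])) j ↔ j = p ∧ a = x ∧ b = z :=
    fun a b j => by
      rw [occursAt_cons_iff, hconcat]
      constructor
      · rintro ⟨ha, ⟨hj, -⟩ | ⟨hj, rfl⟩⟩
        · omega
        · obtain rfl : j = p := by omega
          exact ⟨rfl, by simpa [hx] using ha.symm, rfl⟩
      · rintro ⟨rfl, rfl, rfl⟩
        exact ⟨hx, Or.inr ⟨rfl, rfl⟩⟩
  ext ⟨a, b⟩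
  simp only [Phi, Set.mem_ofPred_eq, occ_eq_one_iff (List.cons_ne_nil _ _),
    occ_eq_one_iff (List.append_ne_nil_of_right_ne_nil w (List.cons_ne_nil b [])),
    hcons, hconcat, hboth]
  split_ifs with hyz
  · subst hyz
    simp only [Set.mem_empty_iff_false, iff_false, not_and]
    rintro - - ⟨i, hi, huniq⟩
    have hb : b = y := by rcases hi with ⟨-, hb⟩ | ⟨-, hb⟩ <;> exact hb
    have := (huniq 0 (Or.inl ⟨rfl, hb⟩)).trans (huniq (p + 1) (Or.inr ⟨rfl, hb⟩)).symm
    omega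
  · rw [Set.mem_singleton_iff, Prod.mk.injEq]
    constructor
    · rintro ⟨⟨i, ⟨-, ha, hb⟩, -⟩, -, -⟩
      exact ⟨ha, hb⟩
    · rintro ⟨rfl, rfl⟩
      refine ⟨⟨p, ⟨rfl, rfl, rfl⟩, fun i hi => hi.1⟩, ⟨p, ⟨rfl, rfl⟩, fun i hi => hi.1⟩,
        ⟨p + 1, Or.inr ⟨rfl, rfl⟩, fun i hi => ?_⟩⟩
      rcases hi with ⟨-, hzy⟩ | ⟨hi, -⟩
      exacts [absurd hzy.symm hyz, hi]

end Occurrences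


/-- Let `S = T ++ [c]` with the last character `c` occurring at no other
position (`c ∉ T`), let `a ≠ c`, and let `w` be nonempty with `occ S w = 1` and
`occ (a :: S) w ≥ 2`. Then `w` is a prefix of `a :: S` and `occ (a :: S) w = 2`.
Moreover, for the (unique) 0-based starting position `i₀` of `w` in `S`
(1-based position `i = i₀ + 1`), we have `i₀ + |w| < |S|` (i.e. `i + |w| ≤ n`), and:
if `S[i+|w|] ≠ S[|w|]` (0-based: `S.getD (i₀ + |w|) a ≠ S.getD (|w| - 1) a`) then
`Phi (a :: S) w = {(d, S[i+|w|])}` where `d = a` if `i₀ = 0` and `d = S[i-1]`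
(0-based `S.getD (i₀ - 1) a`) otherwise; and if `S[i+|w|] = S[|w|]` then
`Phi (a :: S) w = ∅`. -/
theorem stmt10 (S T : List Γ) (c : Γ) (hS : S = T ++ [c]) (hc : c ∉ T)
    (a : Γ) (ha : a ≠ c)
    (w : List Γ) (hw : w ≠ []) (h1 : occ S w = 1) (h2 : 2 ≤ occ (a :: S) w) :
    w <+: (a :: S) ∧ occ (a :: S) w = 2 ∧
    ∀ i₀ : ℕ, (S.drop i₀).take w.length = w →
      i₀ + w.length < S.length ∧
      (S.getD (i₀ + w.length) a ≠ S.getD (w.length - 1) a →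
        Phi (a :: S) w =
          {((if i₀ = 0 then a else S.getD (i₀ - 1) a), S.getD (i₀ + w.length) a)}) ∧
      (S.getD (i₀ + w.length) a = S.getD (w.length - 1) a →
        Phi (a :: S) w = ∅) := by
  have hpre : w <+: a :: S := by
    by_contra h
    rw [occ_cons, h1, if_neg h] at h2
    omega
  refine ⟨hpre, by rw [occ_cons, h1, if_pos hpre], fun i₀ hi₀ => ?_⟩
  have huniq : ∀ j, OccursAt S w j ↔ j = i₀ := fun j =>
    ⟨fun hj => ((occ_eq_one_iff hw).mp h1).unique hj hi₀, fun h => h ▸ hi₀⟩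
  have hocc : ∀ j, OccursAt (a :: S) w j ↔ j = 0 ∨ j = i₀ + 1 := by
    rintro (_ | j)
    · simpa [occursAt_zero_iff] using hpre
    · rw [occursAt_cons_succ_iff, huniq]
      omega
  have hlt : i₀ + w.length < S.length := by
    refine lt_of_le_of_ne (OccursAt.add_length_le hw hi₀) fun heq => ?_
    have hsuf : w <:+ a :: S := OccursAt.isSuffix ((hocc _).mpr (Or.inr rfl)) (by simp; omega)
    rw [hS, ← List.cons_append] at hpre hsuf
    have hwS := List.eq_of_prefix_of_suffix_of_notMem (by simp [hc, ha.symm]) hw hpre hsuf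
    have : w.length = S.length + 1 := by simp [hwS, hS]
    omega
  have hx : (a :: S)[i₀]? = some (if i₀ = 0 then a else S.getD (i₀ - 1) a) :=
    List.getElem?_cons_eq_some_ite (by omega)
  have hy : (a :: S)[w.length]? = some (S.getD (w.length - 1) a) := by
    simpa [hw] using List.getElem?_cons_eq_some_ite (a := a) (by omega : w.length ≤ S.length)
  have hz : (a :: S)[i₀ + 1 + w.length]? = some (S.getD (i₀ + w.length) a) := by
    simpa using List.getElem?_cons_eq_some_ite (a := a) (by omega : i₀ + 1 + w.length ≤ S.length)
  rw [Phi_eq_of_occursAt_iff hocc hx hy hz]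
  exact ⟨hlt, fun hne => if_neg (Ne.symm hne), fun heq => if_pos heq.symm⟩
end

section
/- Let S be a string, a a character, and w a nonempty prefix of S. If (a, β) ∈ Φ_S(w) for a character β, then (a, β) ∉ Φ_{aS}(w); indeed occ_{aS}(aw) = 2. -/
variable {Γ : Type*} [DecidableEq Γ]

lemma occ_cons_s11 (c : Γ) (S v : List Γ) :
    occ (c :: S) v = (if (c :: S).take v.length = v then 1 else 0) + occ S v := by
  unfold occ
  rw [List.length_cons, List.range_succ_eq_map, List.filter_cons, List.filter_map]
  simp [Function.comp_def]
  split <;> simp [Nat.add_comm]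

/-- If `w` is a nonempty prefix of `S` and `(a, β) ∈ Phi S w`, then
`(a, β) ∉ Phi (a :: S) w`; indeed `occ (a :: S) (a :: w) = 2`. -/
theorem stmt11 (S : List Γ) (a : Γ) (w : List Γ) (hw : w ≠ []) (hpre : w <+: S)
    (β : Γ) (h : (a, β) ∈ Phi S w) :
    (a, β) ∉ Phi (a :: S) w ∧ occ (a :: S) (a :: w) = 2 := by
  have htake : S.take w.length = w := (List.prefix_iff_eq_take.mp hpre).symm
  have h2 : occ (a :: S) (a :: w) = 2 := by
    rw [occ_cons_s11]
    simp only [List.length_cons, List.take_succ_cons, htake, if_true]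
    have h1 : occ S (a :: w) = 1 := h.2.1
    omega
  refine ⟨fun h' => ?_, h2⟩
  have h3 : occ (a :: S) (a :: w) = 1 := h'.2.1
  omega
end

section
/- For any string S of length n ≥ 2, the sum, over all distinct maximal repeats w of S, of the number of right-extensions of w in S (i.e., of |{β ∈ Σ : occ_S(wβ) ≥ 1}|) is at most 2n − 2. -/
/-!
Sort the pairs `(w, β)` of a maximal repeat `w` and a right-extension `β` according to whether
`wβ` occurs once or at least twice in `S`; each class has at most `n - 1` elements.

If `wβ` occurs once, the pair is determined by the position of that occurrence, which is below
`n - 1`: were `wβ` a proper prefix of `w'β'` occurring at the same position, it would be a prefix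
of the repeat `w'` and so occur twice.

If `wβ` occurs at least twice, extend it to the right as long as all its occurrences are followed
by the same character. The result `v` is a right-maximal repeat, and it determines `wβ`: were
`wβ` a proper prefix of `w'β'` with the same extension `v`, the right-maximal `w'` would have
stopped the extension of `wβ` before `v`. Finally, `v` is determined by the first position in
`(0, n)` at which it occurs followed by another character (or by the end of `S`) than at its first
occurrence.
-/

variable {Γ : Type*} [DecidableEq Γ]

/-- `w` is a left-maximal repeat candidate: `w` is a prefix of `S`, or
two distinct characters immediately precede occurrences of `w` in `S`. -/
def LeftMaximal (S w : List Γ) : Prop :=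
  w <+: S ∨ ∃ α α' : Γ, α ≠ α' ∧ 1 ≤ occ S (α :: w) ∧ 1 ≤ occ S (α' :: w)

/-- `w` is a right-maximal repeat candidate: `w` is a suffix of `S`, or
two distinct characters immediately follow occurrences of `w` in `S`. -/
def RightMaximal (S w : List Γ) : Prop :=
  w <:+ S ∨ ∃ β β' : Γ, β ≠ β' ∧ 1 ≤ occ S (w ++ [β]) ∧ 1 ≤ occ S (w ++ [β'])

/-- `w` is a maximal repeat of `S`: a nonempty string occurring at least twice in `S`
that is both left-maximal and right-maximal. -/
def MaximalRepeat (S w : List Γ) : Prop :=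
  w ≠ [] ∧ 2 ≤ occ S w ∧ LeftMaximal S w ∧ RightMaximal S w

def occs (S w : List Γ) : Finset ℕ :=
  (Finset.range S.length).filter fun i => (S.drop i).take w.length = w

section Occurrences

variable {S w u : List Γ} {i : ℕ}

theorem occ_eq_card_occs (S w : List Γ) : occ S w = (occs S w).card := rfl

theorem one_le_occ_iff : 1 ≤ occ S w ↔ (occs S w).Nonempty := by
  rw [occ_eq_card_occs, Nat.one_le_iff_ne_zero, Ne, Finset.card_eq_zero,
    Finset.nonempty_iff_ne_empty]

theorem mem_occs : i ∈ occs S w ↔ i < S.length ∧ (S.drop i).take w.length = w := by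
  simp [occs]

theorem add_length_le_of_mem_occs (h : i ∈ occs S w) : i + w.length ≤ S.length := by
  obtain ⟨hi, hw⟩ := mem_occs.1 h
  have := congrArg List.length hw
  simp only [List.length_take, List.length_drop] at this
  omega

theorem getElem?_add_of_mem_occs (h : i ∈ occs S w) {m : ℕ} (hm : m < w.length) :
    S[i + m]? = some w[m] := by
  rw [← List.getElem?_drop, ← List.getElem?_take_of_lt hm, (mem_occs.1 h).2,
    List.getElem?_eq_getElem hm]

theorem occs_subset_occs_of_prefix (h : w <+: u) : occs S u ⊆ occs S w := by
  intro i hi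
  obtain ⟨hi, hu⟩ := mem_occs.1 hi
  refine mem_occs.2 ⟨hi, ?_⟩
  have := congrArg (List.take w.length) hu
  rwa [List.take_take, min_eq_left h.length_le, ← List.prefix_iff_eq_take.1 h] at this

theorem occ_le_occ_of_prefix (h : w <+: u) : occ S u ≤ occ S w :=
  Finset.card_le_card (occs_subset_occs_of_prefix h)

theorem prefix_of_mem_occs_of_mem_occs (hw : i ∈ occs S w) (hu : i ∈ occs S u)
    (hl : w.length ≤ u.length) : w <+: u := by
  rw [List.prefix_iff_eq_take, ← (mem_occs.1 hu).2, List.take_take, min_eq_left hl,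
    (mem_occs.1 hw).2]

theorem mem_occs_append_singleton {β : Γ} :
    i ∈ occs S (w ++ [β]) ↔ i ∈ occs S w ∧ S[i + w.length]? = some β := by
  constructor
  · intro h
    refine ⟨occs_subset_occs_of_prefix (List.prefix_append w [β]) h, ?_⟩
    simpa using getElem?_add_of_mem_occs h (m := w.length) (by simp)
  · rintro ⟨hw, hβ⟩
    obtain ⟨hi, hw⟩ := mem_occs.1 hw
    refine mem_occs.2 ⟨hi, ?_⟩
    rw [List.length_append, List.length_singleton, List.take_add_one, hw, List.getElem?_drop, hβ]
    rfl

theorem suffix_of_mem_occs (h : i ∈ occs S w) (he : i + w.length = S.length) : w <:+ S := by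
  obtain ⟨-, hw⟩ := mem_occs.1 h
  rw [List.take_of_length_le (by simp; omega)] at hw
  exact hw ▸ List.drop_suffix i S

theorem length_sub_length_mem_occs_of_suffix (h : w <:+ S) (hw : w ≠ []) :
    S.length - w.length ∈ occs S w := by
  obtain ⟨t, rfl⟩ := h
  have := List.length_pos_iff.2 hw
  refine mem_occs.2 ⟨by simp; omega, ?_⟩
  simp

theorem infix_of_one_le_occ (h : 1 ≤ occ S w) : w <:+: S := by
  obtain ⟨i, hi⟩ := one_le_occ_iff.1 h
  rw [← (mem_occs.1 hi).2]
  exact (List.take_prefix _ _).isInfix.trans (List.drop_suffix i S).isInfix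

theorem finite_setOf_one_le_occ (S : List Γ) : {w | 1 ≤ occ S w}.Finite := by
  refine (S.tails.flatMap List.inits).finite_toSet.subset fun w hw => ?_
  obtain ⟨t, hwt, htS⟩ := List.infix_iff_prefix_suffix.1 (infix_of_one_le_occ hw)
  simpa using ⟨t, htS, hwt⟩

theorem finite_setOf_one_le_occ_append (S : List Γ) :
    {p : List Γ × Γ | 1 ≤ occ S (p.1 ++ [p.2])}.Finite :=
  (finite_setOf_one_le_occ S).preimage (f := fun p : List Γ × Γ => p.1 ++ [p.2]) fun _ _ _ _ h =>
    Prod.ext_iff.2 (List.append_singleton_inj.1 h)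

theorem add_length_lt_of_not_rightMaximal (hrm : ¬ RightMaximal S u) (hi : i ∈ occs S u) :
    i + u.length < S.length :=
  (add_length_le_of_mem_occs hi).lt_of_ne fun he => hrm (Or.inl (suffix_of_mem_occs hi he))

end Occurrences

noncomputable def firstOcc (S v : List Γ) : ℕ :=
  if h : (occs S v).Nonempty then (occs S v).min' h else 0

section FirstOccurrence

variable {S v w w' : List Γ} {i : ℕ}

theorem firstOcc_mem (h : (occs S v).Nonempty) : firstOcc S v ∈ occs S v := by
  rw [firstOcc, dif_pos h]
  exact Finset.min'_mem _ h

theorem firstOcc_le (hi : i ∈ occs S v) : firstOcc S v ≤ i := by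
  rw [firstOcc, dif_pos ⟨i, hi⟩]
  exact Finset.min'_le _ _ hi

theorem append_singleton_eq_of_firstOcc_eq {β β' : Γ} (h1 : occ S (w ++ [β]) = 1)
    (h2 : 2 ≤ occ S w') (h1' : 1 ≤ occ S (w' ++ [β'])) (hlen : w.length ≤ w'.length)
    (hj : firstOcc S (w ++ [β]) = firstOcc S (w' ++ [β'])) : w ++ [β] = w' ++ [β'] := by
  have hi := firstOcc_mem (one_le_occ_iff.1 h1.ge)
  have hi' := hj ▸ firstOcc_mem (one_le_occ_iff.1 h1')
  rcases hlen.lt_or_eq with hlt | heq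
  · have hpre : w ++ [β] <+: w' :=
      prefix_of_mem_occs_of_mem_occs hi (occs_subset_occs_of_prefix (List.prefix_append _ _) hi')
        (by simpa using hlt)
    have := occ_le_occ_of_prefix (S := S) hpre
    omega
  · exact (prefix_of_mem_occs_of_mem_occs hi hi' (by simp [heq])).eq_of_length (by simp [heq])

theorem ncard_setOf_occ_append_eq_one_le (S : List Γ) :
    {p : List Γ × Γ | p.1 ≠ [] ∧ 2 ≤ occ S p.1 ∧ occ S (p.1 ++ [p.2]) = 1}.ncard
      ≤ S.length - 1 := by
  refine (Set.ncard_le_ncard_of_injOn (fun p => firstOcc S (p.1 ++ [p.2]))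
    (t := ↑(Finset.range (S.length - 1))) ?_ ?_).trans_eq (by simp)
  · rintro ⟨w, β⟩ ⟨hw : w ≠ [], -, h1⟩
    have hle := add_length_le_of_mem_occs (firstOcc_mem (one_le_occ_iff.1 h1.ge))
    have := List.length_pos_iff.2 hw
    simp only [List.length_append, List.length_singleton] at hle
    simp only [Finset.coe_range, Set.mem_Iio]
    omega
  · rintro ⟨w, β⟩ ⟨-, h2, h1⟩ ⟨w', β'⟩ ⟨-, h2', h1'⟩ hj
    rw [Prod.ext_iff, ← List.append_singleton_inj]
    rcases le_total w.length w'.length with hl | hl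
    · exact append_singleton_eq_of_firstOcc_eq h1 h2' h1'.ge hl hj
    · exact (append_singleton_eq_of_firstOcc_eq h1' h2 h1.ge hl hj.symm).symm

end FirstOccurrence

def RightMaximalRepeat (S v : List Γ) : Prop :=
  v ≠ [] ∧ 2 ≤ occ S v ∧ RightMaximal S v

noncomputable def branchOccs (S v : List Γ) : Finset ℕ :=
  (occs S v).filter fun i => S[i + v.length]? ≠ S[firstOcc S v + v.length]?

noncomputable def firstBranchOcc (S v : List Γ) : ℕ :=
  if h : (branchOccs S v).Nonempty then (branchOccs S v).min' h else 0

section BranchOccurrence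

variable {S v v' : List Γ} {i : ℕ}

theorem mem_branchOccs :
    i ∈ branchOccs S v ↔ i ∈ occs S v ∧ S[i + v.length]? ≠ S[firstOcc S v + v.length]? :=
  Finset.mem_filter

theorem firstOcc_notMem_branchOccs : firstOcc S v ∉ branchOccs S v := by
  simp [mem_branchOccs]

theorem firstBranchOcc_mem (h : (branchOccs S v).Nonempty) :
    firstBranchOcc S v ∈ branchOccs S v := by
  rw [firstBranchOcc, dif_pos h]
  exact Finset.min'_mem _ h

theorem firstBranchOcc_le (hi : i ∈ branchOccs S v) : firstBranchOcc S v ≤ i := by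
  rw [firstBranchOcc, dif_pos ⟨i, hi⟩]
  exact Finset.min'_le _ _ hi

theorem RightMaximalRepeat.branchOccs_nonempty (hv : RightMaximalRepeat S v) :
    (branchOccs S v).Nonempty := by
  obtain ⟨hne, h2, hrm⟩ := hv
  obtain ⟨x, hx, hxj⟩ : ∃ x ∈ occs S v, x ≠ firstOcc S v :=
    Finset.exists_mem_ne (occ_eq_card_occs S v ▸ h2) _
  have hjx : firstOcc S v < x := (firstOcc_le hx).lt_of_ne' hxj
  have hjS : firstOcc S v + v.length < S.length := by
    have := add_length_le_of_mem_occs hx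
    omega
  rcases hrm with hsuf | ⟨β, β', hββ', hβ, hβ'⟩
  · refine ⟨_, mem_branchOccs.2 ⟨length_sub_length_mem_occs_of_suffix hsuf hne, ?_⟩⟩
    rw [Nat.sub_add_cancel hsuf.length_le, List.getElem?_eq_none le_rfl,
      List.getElem?_eq_getElem hjS]
    exact (Option.some_ne_none _).symm
  · obtain ⟨i, hi⟩ := one_le_occ_iff.1 hβ
    obtain ⟨i', hi'⟩ := one_le_occ_iff.1 hβ'
    rw [mem_occs_append_singleton] at hi hi'
    by_cases hc : S[firstOcc S v + v.length]? = some β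
    · exact ⟨i', mem_branchOccs.2 ⟨hi'.1, by rw [hi'.2, hc]; simpa using hββ'.symm⟩⟩
    · exact ⟨i, mem_branchOccs.2 ⟨hi.1, by rw [hi.2]; exact Ne.symm hc⟩⟩

theorem firstOcc_lt_firstBranchOcc (h : (branchOccs S v).Nonempty) :
    firstOcc S v < firstBranchOcc S v :=
  have hf := firstBranchOcc_mem h
  (firstOcc_le (mem_branchOccs.1 hf).1).lt_of_ne fun he => firstOcc_notMem_branchOccs (he ▸ hf)

theorem RightMaximalRepeat.firstBranchOcc_mem_Ioo (hv : RightMaximalRepeat S v) :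
    firstBranchOcc S v ∈ Finset.Ioo 0 S.length := by
  have hf := firstBranchOcc_mem hv.branchOccs_nonempty
  have hlt := firstOcc_lt_firstBranchOcc hv.branchOccs_nonempty
  exact Finset.mem_Ioo.2 ⟨by omega, (mem_occs.1 (mem_branchOccs.1 hf).1).1⟩

/-- If `v` is a proper prefix of `v'`, the first occurrence of `v'` is an occurrence of `v` before
`f`, followed by the same character as the occurrence at `f`; being before `f` it is not in
`branchOccs S v`, hence neither is `f`. -/
theorem eq_of_firstBranchOcc_eq (hv : RightMaximalRepeat S v) (hv' : RightMaximalRepeat S v')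
    (hlen : v.length ≤ v'.length) (hf : firstBranchOcc S v = firstBranchOcc S v') : v = v' := by
  have hfv := mem_branchOccs.1 (firstBranchOcc_mem hv.branchOccs_nonempty)
  have hfv' := mem_branchOccs.1 (hf ▸ firstBranchOcc_mem hv'.branchOccs_nonempty)
  rcases hlen.lt_or_eq with hlt | heq
  · exfalso
    have hj' := firstOcc_mem ⟨_, hfv'.1⟩
    have hj'v : firstOcc S v' ∈ occs S v :=
      occs_subset_occs_of_prefix (prefix_of_mem_occs_of_mem_occs hfv.1 hfv'.1 hlen) hj'
    have hj'f : firstOcc S v' < firstBranchOcc S v :=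
      hf ▸ firstOcc_lt_firstBranchOcc hv'.branchOccs_nonempty
    have hsame : S[firstBranchOcc S v + v.length]? = S[firstOcc S v' + v.length]? := by
      rw [getElem?_add_of_mem_occs hfv'.1 hlt, getElem?_add_of_mem_occs hj' hlt]
    have hj'nb : firstOcc S v' ∉ branchOccs S v := fun h => (firstBranchOcc_le h).not_gt hj'f
    rw [mem_branchOccs, not_and_not_right] at hj'nb
    exact hfv.2 (hsame.trans (hj'nb hj'v))
  · rw [← (mem_occs.1 hfv.1).2, ← (mem_occs.1 hfv'.1).2, heq]

theorem ncard_setOf_rightMaximalRepeat_le (S : List Γ) :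
    {v | RightMaximalRepeat S v}.ncard ≤ S.length - 1 := by
  refine (Set.ncard_le_ncard_of_injOn (firstBranchOcc S) (t := ↑(Finset.Ioo 0 S.length))
    (fun v hv => hv.firstBranchOcc_mem_Ioo) ?_).trans_eq (by simp)
  intro v hv v' hv' hf
  rcases le_total v.length v'.length with hl | hl
  · exact eq_of_firstBranchOcc_eq hv hv' hl hf
  · exact (eq_of_firstBranchOcc_eq hv' hv hl hf.symm).symm

end BranchOccurrence

def IsRightClosure (S u v : List Γ) : Prop :=
  u <+: v ∧ occs S v = occs S u ∧ RightMaximal S v ∧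
    ∀ p, u <+: p → p <+: v → RightMaximal S p → p = v

section RightClosure

variable {S u v w w' : List Γ} {i : ℕ}

theorem isRightClosure_self (hrm : RightMaximal S u) : IsRightClosure S u u :=
  ⟨List.prefix_rfl, rfl, hrm, fun _ hup hpu _ =>
    hpu.eq_of_length (le_antisymm hpu.length_le hup.length_le)⟩

theorem occs_append_getElem_of_not_rightMaximal (hrm : ¬ RightMaximal S u) (hi : i ∈ occs S u) :
    occs S (u ++ [S[i + u.length]'(add_length_lt_of_not_rightMaximal hrm hi)]) = occs S u := by
  refine (occs_subset_occs_of_prefix (List.prefix_append _ _)).antisymm fun k hk => ?_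
  have hkS := add_length_lt_of_not_rightMaximal hrm hk
  refine mem_occs_append_singleton.2 ⟨hk, ?_⟩
  by_contra hne
  rw [List.getElem?_eq_getElem hkS, Option.some_inj] at hne
  exact hrm (Or.inr ⟨_, _, hne, one_le_occ_iff.2 ⟨k, mem_occs_append_singleton.2 ⟨hk, by simp⟩⟩,
    one_le_occ_iff.2 ⟨i, mem_occs_append_singleton.2 ⟨hi, by simp⟩⟩⟩)

theorem IsRightClosure.of_append_singleton {β : Γ} (hrm : ¬ RightMaximal S u)
    (hocc : occs S (u ++ [β]) = occs S u) (hv : IsRightClosure S (u ++ [β]) v) :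
    IsRightClosure S u v := by
  obtain ⟨hpre, hoccv, hrmv, hmin⟩ := hv
  refine ⟨(List.prefix_append _ _).trans hpre, hoccv.trans hocc, hrmv, fun p hup hpv hrmp => ?_⟩
  refine hmin p (List.prefix_of_prefix_length_le hpre hpv ?_) hpv hrmp
  rcases hup.length_le.lt_or_eq with hlt | heq
  · simpa using hlt
  · exact absurd (hup.eq_of_length heq ▸ hrmp) hrm

theorem exists_isRightClosure {u : List Γ} (hu : (occs S u).Nonempty) :
    ∃ v, IsRightClosure S u v := by
  by_cases hrm : RightMaximal S u
  · exact ⟨u, isRightClosure_self hrm⟩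
  obtain ⟨i, hi⟩ := hu
  have hlt := add_length_lt_of_not_rightMaximal hrm hi
  have hocc := occs_append_getElem_of_not_rightMaximal hrm hi
  obtain ⟨v, hv⟩ :=
    exists_isRightClosure (u := u ++ [S[i + u.length]]) (by rw [hocc]; exact ⟨i, hi⟩)
  exact ⟨v, hv.of_append_singleton hrm hocc⟩
termination_by S.length - u.length
decreasing_by simp_wf; omega

noncomputable def rightClosure (S u : List Γ) : List Γ :=
  if h : (occs S u).Nonempty then (exists_isRightClosure h).choose else u

theorem isRightClosure_rightClosure (h : (occs S u).Nonempty) :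
    IsRightClosure S u (rightClosure S u) := by
  rw [rightClosure, dif_pos h]
  exact (exists_isRightClosure h).choose_spec

theorem rightMaximalRepeat_rightClosure (hu : u ≠ []) (h2 : 2 ≤ occ S u) :
    RightMaximalRepeat S (rightClosure S u) := by
  obtain ⟨hpre, hocc, hrm, -⟩ :=
    isRightClosure_rightClosure (one_le_occ_iff.1 (one_le_two.trans h2))
  refine ⟨fun h => hu (List.prefix_nil.1 (h ▸ hpre)), ?_, hrm⟩
  rwa [occ_eq_card_occs, hocc]

theorem append_singleton_eq_of_rightClosure_eq {β β' : Γ} (hw' : RightMaximal S w')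
    (h : 1 ≤ occ S (w ++ [β])) (h' : 1 ≤ occ S (w' ++ [β'])) (hlen : w.length ≤ w'.length)
    (hcl : rightClosure S (w ++ [β]) = rightClosure S (w' ++ [β'])) :
    w ++ [β] = w' ++ [β'] := by
  obtain ⟨hpre, -, -, hmin⟩ := isRightClosure_rightClosure (one_le_occ_iff.1 h)
  obtain ⟨hpre', -⟩ := isRightClosure_rightClosure (one_le_occ_iff.1 h')
  rw [← hcl] at hpre'
  rcases hlen.lt_or_eq with hlt | heq
  · have hw'v := (List.prefix_append w' [β']).trans hpre'
    have := congrArg List.length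
      (hmin w' (List.prefix_of_prefix_length_le hpre hw'v (by simpa using hlt)) hw'v hw')
    have := hpre'.length_le
    simp only [List.length_append, List.length_singleton] at this
    omega
  · exact (List.prefix_of_prefix_length_le hpre hpre' (by simp [heq])).eq_of_length (by simp [heq])

theorem ncard_setOf_two_le_occ_append_le (S : List Γ) :
    {p : List Γ × Γ | RightMaximal S p.1 ∧ 2 ≤ occ S (p.1 ++ [p.2])}.ncard ≤ S.length - 1 := by
  refine (Set.ncard_le_ncard_of_injOn (fun p => rightClosure S (p.1 ++ [p.2]))
    (fun p hp => rightMaximalRepeat_rightClosure (by simp) hp.2) ?_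
    ((finite_setOf_one_le_occ S).subset fun _ hv => one_le_two.trans hv.2.1)).trans
    (ncard_setOf_rightMaximalRepeat_le S)
  rintro ⟨w, β⟩ ⟨hw : RightMaximal S w, h2 : 2 ≤ occ S (w ++ [β])⟩
    ⟨w', β'⟩ ⟨hw' : RightMaximal S w', h2' : 2 ≤ occ S (w' ++ [β'])⟩ hcl
  rw [Prod.ext_iff, ← List.append_singleton_inj]
  rcases le_total w.length w'.length with hl | hl
  · exact append_singleton_eq_of_rightClosure_eq hw' (one_le_two.trans h2)
      (one_le_two.trans h2') hl hcl
  · exact (append_singleton_eq_of_rightClosure_eq hw (one_le_two.trans h2')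
      (one_le_two.trans h2) hl hcl.symm).symm

end RightClosure

theorem finsum_mem_ncard_eq_ncard {α β : Type*} {M : Set α} {F : α → Set β} (hM : M.Finite)
    (hF : ∀ a ∈ M, (F a).Finite) :
    ∑ᶠ a ∈ M, (F a).ncard = {p : α × β | p.1 ∈ M ∧ p.2 ∈ F p.1}.ncard := by
  have hunion : {p : α × β | p.1 ∈ M ∧ p.2 ∈ F p.1} = ⋃ a ∈ M, Prod.mk a '' F a := by
    ext ⟨a, b⟩
    simp [and_comm]
  rw [hunion, hM.ncard_biUnion (fun a ha => (hF a ha).image _)]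
  · exact finsum_mem_congr rfl fun a _ =>
      (Set.ncard_image_of_injective _ (Prod.mk_right_injective a)).symm
  · intro a _ a' _ ha
    simp only [Function.onFun, Set.disjoint_left, Set.mem_image]
    rintro _ ⟨b, -, rfl⟩ ⟨b', -, h⟩
    exact ha (congrArg Prod.fst h).symm

theorem stmt17_general (S : List Γ) :
    ∑ᶠ w ∈ {w : List Γ | MaximalRepeat S w}, {β : Γ | 1 ≤ occ S (w ++ [β])}.ncard
      ≤ 2 * S.length - 2 := by
  have hfin := finite_setOf_one_le_occ_append S
  have hM : {w : List Γ | MaximalRepeat S w}.Finite :=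
    (finite_setOf_one_le_occ S).subset fun _ hw => one_le_two.trans hw.2.1
  rw [finsum_mem_ncard_eq_ncard (F := fun w => {β | 1 ≤ occ S (w ++ [β])}) hM
    fun w _ => hfin.preimage (f := Prod.mk w) (Prod.mk_right_injective w).injOn]
  set U := {p : List Γ × Γ | p.1 ≠ [] ∧ 2 ≤ occ S p.1 ∧ occ S (p.1 ++ [p.2]) = 1}
  set R := {p : List Γ × Γ | RightMaximal S p.1 ∧ 2 ≤ occ S (p.1 ++ [p.2])}
  have hsplit : {p : List Γ × Γ | MaximalRepeat S p.1 ∧ 1 ≤ occ S (p.1 ++ [p.2])} ⊆ U ∪ R := by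
    rintro p ⟨⟨hne, h2, -, hrm⟩, h1⟩
    by_cases hu : occ S (p.1 ++ [p.2]) = 1
    · exact Or.inl ⟨hne, h2, hu⟩
    · exact Or.inr ⟨hrm, by omega⟩
  have hUR : (U ∪ R).Finite :=
    hfin.subset (Set.union_subset (fun _ hp => hp.2.2.ge) fun _ hp => one_le_two.trans hp.2)
  calc _ ≤ (U ∪ R).ncard := Set.ncard_le_ncard hsplit hUR
    _ ≤ U.ncard + R.ncard := Set.ncard_union_le U R
    _ ≤ (S.length - 1) + (S.length - 1) := add_le_add
        (ncard_setOf_occ_append_eq_one_le S) (ncard_setOf_two_le_occ_append_le S)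
    _ = 2 * S.length - 2 := by omega

/-- For any string `S` of length `n ≥ 2`, the sum over all distinct
maximal repeats `w` of `S` of the number of right-extensions of `w` in `S` is at most
`2n - 2`. -/
theorem stmt17 (S : List Γ) (hn : 2 ≤ S.length) :
    ∑ᶠ w ∈ {w : List Γ | MaximalRepeat S w}, {β : Γ | 1 ≤ occ S (w ++ [β])}.ncard
      ≤ 2 * S.length - 2 :=
  stmt17_general S
end
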